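/- The minimum total extent of a feasible assignment for a path pair graph equals the maximum size of a matching in the constraint graph C_G (König duality applies since C_G is bipartite). -/

import Mathlib

open Finset

variable {m : ℕ}

/-- First endpoint of the `e`-th edge of the Hamiltonian path induced by `π`. -/
def pFst (π : Equiv.Perm (Fin (m+1))) (e : Fin m) : Fin (m+1) := π e.castSucc

/-- Second endpoint of the `e`-th edge of the Hamiltonian path induced by `π`. -/
def pSnd (π : Equiv.Perm (Fin (m+1))) (e : Fin m) : Fin (m+1) := π e.succ

/-- Position of vertex `v` along the Hamiltonian path induced by `π`. -/
def pos (π : Equiv.Perm (Fin (m+1))) (v : Fin (m+1)) : ℕ := (π.symm v : ℕ)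

/-- Edges `e` and `f = e+1` of `P_x` form a switch pair: both `P_x`-neighbours of the
middle internal vertex `πx e.succ` lie on the same side of it in `π_y`. -/
def SwitchPairX (πx πy : Equiv.Perm (Fin (m+1))) (e f : Fin m) : Prop :=
  (e : ℕ) + 1 = (f : ℕ) ∧
    ((pos πy (pFst πx e) < pos πy (pSnd πx e) ∧ pos πy (pSnd πx f) < pos πy (pSnd πx e)) ∨
     (pos πy (pSnd πx e) < pos πy (pFst πx e) ∧ pos πy (pSnd πx e) < pos πy (pSnd πx f)))

/-- Switch pairs of `P_y`: the same with the roles of the permutations swapped. -/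
def SwitchPairY (πx πy : Equiv.Perm (Fin (m+1))) (e f : Fin m) : Prop :=
  SwitchPairX πy πx e f

/-- The `P_x`-edge `e` and the `P_y`-edge `f` have the same (unordered) pair of endpoints. -/
def SharedEdge (πx πy : Equiv.Perm (Fin (m+1))) (e f : Fin m) : Prop :=
  (pFst πx e = pFst πy f ∧ pSnd πx e = pSnd πy f) ∨
  (pFst πx e = pSnd πy f ∧ pSnd πx e = pFst πy f)

/-- Alignment of the `P_x`-edge `e`: positive (`True`) iff its endpoints appear in the
same relative order in `π_x` and `π_y`. -/
def AlignX (πx πy : Equiv.Perm (Fin (m+1))) (e : Fin m) : Prop :=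
  pos πy (pFst πx e) < pos πy (pSnd πx e)

/-- Alignment of the `P_y`-edge `e`. -/
def AlignY (πx πy : Equiv.Perm (Fin (m+1))) (e : Fin m) : Prop :=
  pos πx (pFst πy e) < pos πx (pSnd πy e)

/-- The constraint graph `C_G` on the disjoint union `V_X ⊕ V_Y` of the edges of the
two paths: switch pairs inside each part, and a matching edge for each shared edge. -/
def CG (πx πy : Equiv.Perm (Fin (m+1))) : SimpleGraph (Fin m ⊕ Fin m) where
  Adj a b :=
    match a, b with
    | .inl e, .inl f => SwitchPairX πx πy e f ∨ SwitchPairX πx πy f e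
    | .inr e, .inr f => SwitchPairY πx πy e f ∨ SwitchPairY πx πy f e
    | .inl e, .inr f => SharedEdge πx πy e f
    | .inr f, .inl e => SharedEdge πx πy e f
  symm := ⟨by rintro (e|e) (f|f) h <;> simp only at h ⊢ <;> tauto⟩
  loopless := ⟨by
    rintro (e|e) (⟨h, -⟩ | ⟨h, -⟩) <;> omega⟩


/-- Feasibility of nonnegative integer extents `dx` (on `P_x`-edges) and `dy`
(on `P_y`-edges): the three extent constraints. -/
def Feasible (πx πy : Equiv.Perm (Fin (m+1))) (dx dy : Fin m → ℕ) : Prop :=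
  (∀ e f : Fin m, SwitchPairX πx πy e f → 1 ≤ dx e + dx f) ∧
  (∀ e f : Fin m, SwitchPairY πx πy e f → 1 ≤ dy e + dy f) ∧
  (∀ e f : Fin m, SharedEdge πx πy e f → 1 ≤ dx e + dy f)

/-- The coordinate of vertex `v` obtained by prefix-summing the extents `d`
along the path induced by `π`, starting from `0`. -/
def coord (π : Equiv.Perm (Fin (m+1))) (d : Fin m → ℕ) (v : Fin (m+1)) : ℕ :=
  ∑ i ∈ Finset.univ.filter (fun i : Fin m => (i : ℕ) < pos π v), d i

/-- The total extent of an assignment. -/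
def totalExtent (dx dy : Fin m → ℕ) : ℕ := (∑ e, dx e) + ∑ f, dy f

/-!
A feasible assignment is the same thing as a weighting of the vertices of `C_G` by natural
numbers giving every edge total weight at least one. Such a weighting dominates the size of every
matching, since the edges of a matching are disjoint; and the indicator of a vertex cover is such
a weighting. So it suffices to find a vertex cover and a matching of equal size, which is König's
theorem: `C_G` is bipartite because the alignment of an edge flips along a switch pair and is kept
by a shared edge. König's theorem follows from Hall's: if `C` is a minimum vertex cover, every
independent `s ⊆ C` has at least `#s` neighbours outside `C` (else replacing `s` by them gives a
smaller cover), and in a bipartite graph this extends to all `s ⊆ C` by splitting `s` along the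
bipartition.
-/

namespace SimpleGraph

variable {V : Type*} {G : SimpleGraph V}

namespace Subgraph

variable {M : G.Subgraph}

theorem IsMatching.eq_of_mem_edgeSet (hM : M.IsMatching) {v : V} {e e' : Sym2 V}
    (he : e ∈ M.edgeSet) (he' : e' ∈ M.edgeSet) (hv : v ∈ e) (hv' : v ∈ e') : e = e' := by
  rw [← Sym2.other_spec hv, Subgraph.mem_edgeSet] at he
  rw [← Sym2.other_spec hv', Subgraph.mem_edgeSet] at he'
  rw [← Sym2.other_spec hv, ← Sym2.other_spec hv', hM.eq_of_adj_left he he']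

theorem IsMatching.ncard_edgeSet_le_of_isVertexCover (hM : M.IsMatching) {C : Set V}
    (hC : G.IsVertexCover C) (hCfin : C.Finite) : M.edgeSet.ncard ≤ C.ncard := by
  have hmeet : ∀ e ∈ M.edgeSet, ∃ v ∈ C, v ∈ e := by
    intro e he
    induction e using Sym2.ind with
    | _ a b =>
      rcases hC (M.adj_sub he) with h | h
      · exact ⟨a, h, Sym2.mem_mk_left a b⟩
      · exact ⟨b, h, Sym2.mem_mk_right a b⟩
  rcases isEmpty_or_nonempty V with _ | _
  · simp [Set.eq_empty_of_isEmpty M.edgeSet]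
  choose! pick hpickC hpick using hmeet
  exact Set.ncard_le_ncard_of_injOn pick hpickC
    (fun e he e' he' h => hM.eq_of_mem_edgeSet he he' (hpick e he) (h ▸ hpick e' he')) hCfin

theorem IsMatching.ncard_edgeSet_le_sum [Fintype V] (hM : M.IsMatching) (w : V → ℕ)
    (hw : ∀ a b, G.Adj a b → 1 ≤ w a + w b) : M.edgeSet.ncard ≤ ∑ v, w v := by
  classical
  have hcover : G.IsVertexCover {v | 1 ≤ w v} := by
    intro a b hab
    have := hw a b hab
    simp only [Set.mem_ofPred_eq]
    omega
  calc M.edgeSet.ncard ≤ {v | 1 ≤ w v}.ncard :=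
        hM.ncard_edgeSet_le_of_isVertexCover hcover (Set.toFinite _)
    _ = #{v | 1 ≤ w v} := by rw [← Set.ncard_coe_finset, coe_filter_univ]
    _ = ∑ v ∈ {v | 1 ≤ w v}, 1 := card_eq_sum_ones _
    _ ≤ ∑ v ∈ {v | 1 ≤ w v}, w v := sum_le_sum fun v hv => (mem_filter.mp hv).2
    _ ≤ ∑ v, w v := sum_le_sum_of_subset (filter_subset _ _)

end Subgraph

theorem exists_isMatching_ncard_edgeSet_eq {S : Set V} (f : S → V) (hf : Function.Injective f)
    (hfS : ∀ x, f x ∉ S) (hadj : ∀ x : S, G.Adj x (f x)) :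
    ∃ M : G.Subgraph, M.IsMatching ∧ M.edgeSet.ncard = S.ncard := by
  refine ⟨⨆ x : S, G.subgraphOfAdj (hadj x),
    Subgraph.IsMatching.iSup (fun x => .subgraphOfAdj (hadj x)) ?_, ?_⟩
  · intro x y hxy
    simp only [support_subgraphOfAdj, Set.disjoint_insert_left,
      Set.disjoint_insert_right, Set.disjoint_singleton, Set.mem_insert_iff,
      Set.mem_singleton_iff]
    have := hfS x
    have := hfS y
    grind
  · simp only [Subgraph.edgeSet_iSup, edgeSet_subgraphOfAdj, Set.iUnion_singleton_eq_range]
    rw [Set.ncard_range_of_injective, Nat.card_coe_set_eq]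
    intro x y h
    rcases Sym2.eq_iff.mp h with ⟨hxy, -⟩ | ⟨hxy, -⟩
    · exact Subtype.ext hxy
    · exact absurd (hxy ▸ x.2) (hfS y)

section Konig

variable [Fintype V] [DecidableEq V] [DecidableRel G.Adj]

def neighborsOutside (G : SimpleGraph V) [DecidableRel G.Adj] (C s : Finset V) : Finset V :=
  {y | (∃ x ∈ s, G.Adj x y) ∧ y ∉ C}

variable {C : Finset V}

theorem neighborsOutside_union (s t : Finset V) :
    G.neighborsOutside C (s ∪ t) = G.neighborsOutside C s ∪ G.neighborsOutside C t := by
  ext y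
  simp only [neighborsOutside, mem_filter, mem_univ, true_and, mem_union]
  grind

theorem card_le_card_neighborsOutside_of_isIndepSet (hC : G.IsVertexCover C)
    (hmin : ∀ D : Finset V, G.IsVertexCover D → #C ≤ #D) {s : Finset V} (hsC : s ⊆ C)
    (hs : G.IsIndepSet s) : #s ≤ #(G.neighborsOutside C s) := by
  have hcover : G.IsVertexCover ↑(C \ s ∪ G.neighborsOutside C s) := by
    intro a b hab
    simp only [neighborsOutside, coe_union, coe_sdiff, coe_filter, mem_univ, true_and,
      Set.mem_union, Set.mem_sdiff, mem_coe, Set.mem_ofPred_eq]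
    by_cases ha : a ∈ s
    · have hb : b ∉ s := fun hb => hs ha hb hab.ne hab
      by_cases hbC : b ∈ C
      · exact .inr (.inl ⟨hbC, hb⟩)
      · exact .inr (.inr ⟨⟨a, ha, hab⟩, hbC⟩)
    by_cases hb : b ∈ s
    · by_cases haC : a ∈ C
      · exact .inl (.inl ⟨haC, ha⟩)
      · exact .inl (.inr ⟨⟨b, hb, hab.symm⟩, haC⟩)
    rcases hC hab with haC | hbC
    · exact .inl (.inl ⟨haC, ha⟩)
    · exact .inr (.inl ⟨hbC, hb⟩)
  have := hmin _ hcover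
  have := card_union_le (C \ s) (G.neighborsOutside C s)
  have := card_sdiff_of_subset hsC
  have := card_le_card hsC
  omega

theorem IsBipartiteWith.card_le_card_neighborsOutside {P Q : Set V} (hG : G.IsBipartiteWith P Q)
    (hC : G.IsVertexCover C) (hmin : ∀ D : Finset V, G.IsVertexCover D → #C ≤ #D)
    {s : Finset V} (hsC : s ⊆ C) : #s ≤ #(G.neighborsOutside C s) := by
  classical
  have hside : ∀ ⦃a b⦄, G.Adj a b → (a ∈ P ↔ b ∉ P) := fun a b hab => by
    rcases hG.mem_of_adj hab with ⟨ha, hb⟩ | ⟨ha, hb⟩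
    · exact iff_of_true ha (hG.disjoint.notMem_of_mem_right hb)
    · exact iff_of_false (hG.disjoint.notMem_of_mem_right ha) (not_not.mpr hb)
  have hindep₁ : G.IsIndepSet ↑(s.filter (· ∈ P)) := fun a ha b hb _ hab => by
    simp only [coe_filter, Set.mem_ofPred_eq] at ha hb
    exact (hside hab).mp ha.2 hb.2
  have hindep₂ : G.IsIndepSet ↑(s.filter (· ∉ P)) := fun a ha b hb _ hab => by
    simp only [coe_filter, Set.mem_ofPred_eq] at ha hb
    exact ha.2 ((hside hab).mpr hb.2)
  have hdisj : Disjoint (G.neighborsOutside C (s.filter (· ∈ P)))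
      (G.neighborsOutside C (s.filter (· ∉ P))) := by
    rw [Finset.disjoint_left]
    intro y hy₁ hy₂
    simp only [neighborsOutside, mem_filter, mem_univ, true_and] at hy₁ hy₂
    obtain ⟨⟨a, ⟨-, ha⟩, hay⟩, -⟩ := hy₁
    obtain ⟨⟨b, ⟨-, hb⟩, hby⟩, -⟩ := hy₂
    exact hb ((hside hby).mpr ((hside hay).mp ha))
  have hsub (p : V → Prop) [DecidablePred p] : s.filter p ⊆ C := (filter_subset _ _).trans hsC
  calc #s = #(s.filter (· ∈ P)) + #(s.filter (· ∉ P)) :=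
        (card_filter_add_card_filter_not _).symm
    _ ≤ #(G.neighborsOutside C (s.filter (· ∈ P))) +
          #(G.neighborsOutside C (s.filter (· ∉ P))) :=
      add_le_add (card_le_card_neighborsOutside_of_isIndepSet hC hmin (hsub _) hindep₁)
        (card_le_card_neighborsOutside_of_isIndepSet hC hmin (hsub _) hindep₂)
    _ = #(G.neighborsOutside C s) := by
      rw [← card_union_of_disjoint hdisj, ← neighborsOutside_union, filter_union_filter_not_eq]

end Konig

theorem IsBipartite.exists_isVertexCover_isMatching_card_eq [Fintype V] (hG : G.IsBipartite) :
    ∃ (C : Finset V) (M : G.Subgraph),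
      G.IsVertexCover C ∧ M.IsMatching ∧ M.edgeSet.ncard = #C := by
  classical
  obtain ⟨P, Q, hPQ⟩ := hG.exists_isBipartiteWith
  obtain ⟨C, hC, hmin⟩ := exists_min_image {D : Finset V | G.IsVertexCover D} card
    ⟨univ, by simp⟩
  simp only [mem_filter, mem_univ, true_and] at hC hmin
  have hall : ∀ A : Finset (C : Set V), #A ≤ #{y | ∃ x ∈ A, G.Adj x y ∧ y ∉ C} := by
    intro A
    have := hPQ.card_le_card_neighborsOutside hC hmin (s := A.map (.subtype _))
      (fun x hx => by obtain ⟨x, -, rfl⟩ := mem_map.mp hx; exact x.2)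
    convert this using 2
    · exact (card_map _).symm
    · ext y
      simp only [neighborsOutside, mem_filter, mem_univ, true_and, mem_map,
        Function.Embedding.coe_subtype]
      grind
  obtain ⟨f, hf, hfadj⟩ := (Fintype.all_card_le_filter_rel_iff_exists_injective _).mp hall
  obtain ⟨M, hM, hcard⟩ :=
    exists_isMatching_ncard_edgeSet_eq f hf (fun x => (hfadj x).2) (fun x => (hfadj x).1)
  exact ⟨C, M, hC, hM, by rw [hcard, Set.ncard_coe_finset]⟩

end SimpleGraph

theorem csInf_eq_csSup_of_forall_le {α : Type*} [ConditionallyCompleteLattice α] {s t : Set α}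
    (h : ∀ a ∈ s, ∀ b ∈ t, b ≤ a) {c : α} (hs : c ∈ s) (ht : c ∈ t) :
    sInf s = sSup t :=
  le_antisymm
    ((csInf_le ⟨c, fun a ha => h a ha c ht⟩ hs).trans
      (le_csSup ⟨c, fun b hb => h c hs b hb⟩ ht))
    (csSup_le ⟨c, ht⟩ fun b hb => le_csInf ⟨c, hs⟩ fun a ha => h a ha b hb)

section ConstraintGraph

open SimpleGraph

variable (πx πy : Equiv.Perm (Fin (m+1)))

@[simp]
theorem pos_pFst (e : Fin m) : pos πx (pFst πx e) = e := by
  simp [pos, pFst]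

@[simp]
theorem pos_pSnd (e : Fin m) : pos πx (pSnd πx e) = e + 1 := by
  simp [pos, pSnd]

variable {πx πy}

theorem pFst_eq_pSnd_of_add_one_eq {e f : Fin m} (h : (e : ℕ) + 1 = f) :
    pFst πx f = pSnd πx e := by
  simp only [pFst, pSnd]
  congr 1
  ext
  simp [← h]

theorem SwitchPairX.alignX_iff_not_alignX {e f : Fin m} (h : SwitchPairX πx πy e f) :
    AlignX πx πy e ↔ ¬ AlignX πx πy f := by
  obtain ⟨hef, hside⟩ := h
  rw [AlignX, AlignX, pFst_eq_pSnd_of_add_one_eq hef]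
  omega

theorem SharedEdge.alignX_iff_alignY {e f : Fin m} (h : SharedEdge πx πy e f) :
    AlignX πx πy e ↔ AlignY πx πy f := by
  rcases h with ⟨h₁, h₂⟩ | ⟨h₁, h₂⟩
  · exact iff_of_true (by rw [AlignX, h₁, h₂]; simp) (by rw [AlignY, ← h₁, ← h₂]; simp)
  · exact iff_of_false (by rw [AlignX, h₁, h₂]; simp)
      (by rw [AlignY, ← h₁, ← h₂]; simp)

@[simp]
theorem cg_adj_inl_inl {e f : Fin m} :
    (CG πx πy).Adj (.inl e) (.inl f) ↔ SwitchPairX πx πy e f ∨ SwitchPairX πx πy f e :=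
  Iff.rfl

@[simp]
theorem cg_adj_inr_inr {e f : Fin m} :
    (CG πx πy).Adj (.inr e) (.inr f) ↔ SwitchPairY πx πy e f ∨ SwitchPairY πx πy f e :=
  Iff.rfl

@[simp]
theorem cg_adj_inl_inr {e f : Fin m} :
    (CG πx πy).Adj (.inl e) (.inr f) ↔ SharedEdge πx πy e f :=
  Iff.rfl

@[simp]
theorem cg_adj_inr_inl {e f : Fin m} :
    (CG πx πy).Adj (.inr f) (.inl e) ↔ SharedEdge πx πy e f :=
  Iff.rfl

variable (πx πy) in
def CGSide : Fin m ⊕ Fin m → Prop :=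
  Sum.elim (AlignX πx πy) fun f => ¬ AlignY πx πy f

theorem cgSide_iff_not_of_adj {a b : Fin m ⊕ Fin m} (h : (CG πx πy).Adj a b) :
    CGSide πx πy a ↔ ¬ CGSide πx πy b := by
  rcases a with e | e <;> rcases b with f | f <;>
    simp only [cg_adj_inl_inl, cg_adj_inr_inr, cg_adj_inl_inr, cg_adj_inr_inl] at h <;>
    simp only [CGSide, Sum.elim_inl, Sum.elim_inr, not_not]
  · rcases h with h | h <;> have := h.alignX_iff_not_alignX <;> tauto
  · have := h.alignX_iff_alignY; tauto
  · have := h.alignX_iff_alignY; tauto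
  · rcases h with h | h <;> have := SwitchPairX.alignX_iff_not_alignX h <;> unfold AlignY <;>
      tauto

variable (πx πy) in
theorem isBipartite_cg : (CG πx πy).IsBipartite :=
  IsBipartiteWith.isBipartite (s := {a | CGSide πx πy a}) (t := {a | ¬ CGSide πx πy a})
    ⟨Set.disjoint_left.mpr fun _ ha hb => hb ha, fun a b hab => by
      have := cgSide_iff_not_of_adj hab
      simp only [Set.mem_ofPred_eq]
      tauto⟩

theorem feasible_iff_forall_adj {dx dy : Fin m → ℕ} :
    Feasible πx πy dx dy ↔
      ∀ a b, (CG πx πy).Adj a b → 1 ≤ Sum.elim dx dy a + Sum.elim dx dy b := by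
  refine ⟨fun ⟨hX, hY, hS⟩ => ?_, fun h => ⟨?_, ?_, ?_⟩⟩
  · rintro (e | e) (f | f) hef <;>
      simp only [cg_adj_inl_inl, cg_adj_inr_inr, cg_adj_inl_inr, cg_adj_inr_inl] at hef <;>
      simp only [Sum.elim_inl, Sum.elim_inr]
    · rcases hef with hef | hef
      · exact hX e f hef
      · linarith [hX f e hef]
    · exact hS e f hef
    · linarith [hS f e hef]
    · rcases hef with hef | hef
      · exact hY e f hef
      · linarith [hY f e hef]
  · exact fun e f hef => h (.inl e) (.inl f) (.inl hef)
  · exact fun e f hef => h (.inr e) (.inr f) (.inl hef)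
  · exact fun e f hef => h (.inl e) (.inr f) hef

theorem totalExtent_eq_sum (dx dy : Fin m → ℕ) :
    totalExtent dx dy = ∑ a, Sum.elim dx dy a := by
  simp [totalExtent, Fintype.sum_sum_type]

end ConstraintGraph

/-- the minimum total extent of a feasible assignment equals the maximum
size of a matching in the constraint graph `C_G` (König duality, `C_G` bipartite). -/
theorem minExtent_eq_maxMatching {m : ℕ} (πx πy : Equiv.Perm (Fin (m+1))) :
    sInf {t | ∃ dx dy : Fin m → ℕ, Feasible πx πy dx dy ∧ totalExtent dx dy = t} =
      sSup {k | ∃ M : (CG πx πy).Subgraph, M.IsMatching ∧ M.edgeSet.ncard = k} := by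
  obtain ⟨C, M, hC, hM, hMC⟩ := (isBipartite_cg πx πy).exists_isVertexCover_isMatching_card_eq
  let w : Fin m ⊕ Fin m → ℕ := fun a => if a ∈ C then 1 else 0
  have hw : ∀ a b, (CG πx πy).Adj a b → 1 ≤ w a + w b := fun a b hab => by
    rcases hC hab with h | h <;> simp [w, mem_coe.mp h]
  refine csInf_eq_csSup_of_forall_le (c := #C) ?_
    ⟨w ∘ .inl, w ∘ .inr, ?_, ?_⟩ ⟨M, hM, hMC⟩
  · rintro _ ⟨dx, dy, hF, rfl⟩ _ ⟨M', hM', rfl⟩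
    rw [totalExtent_eq_sum]
    exact hM'.ncard_edgeSet_le_sum _ (feasible_iff_forall_adj.mp hF)
  · rwa [feasible_iff_forall_adj, Sum.elim_comp_inl_inr]
  · simp [totalExtent_eq_sum, w]
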